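/- arXiv:1111.4842 — 5 statements merged into one kernel-verified Lean document; each statement's English description precedes it below -/
import Mathlib

section
/- For every positive integer n, β(n) ≤ φ*(n), with equality if and only if n is squarefree or twice a squarefree number; here φ* is the unitary Euler function, i.e., the multiplicative function with φ*(p^a) = p^a − 1 for every prime power p^a with a ≥ 1, and φ*(1) = 1. -/
/-- The Liouville function `λ(n) = (-1)^Ω(n)`. -/
def lam (n : ℕ) : ℤ := (-1) ^ (ArithmeticFunction.cardFactors n)

/-- The alternating sum-of-divisors function `β(n) = ∑_{d ∣ n} d · λ(n/d)`. -/
def beta (n : ℕ) : ℤ := ∑ d ∈ n.divisors, (d : ℤ) * lam (n / d)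

/-- The unitary Euler function `φ*(n) = ∏_{p^a ∥ n} (p^a - 1)`, with `φ*(1) = 1`. -/
def phiStar (n : ℕ) : ℕ := n.factorization.prod fun p a => p ^ a - 1

/-!
`β = id * λ` is multiplicative, and on prime powers `β(p^(k+1)) = p^(k+1) - β(p^k)`.
By induction `1 ≤ β(p^k) ≤ p^k`, hence `β(p^k) ≤ p^k - 1 = φ*(p^k)` for `k ≥ 1`, with equality iff
`β(p^(k-1)) = 1`, i.e. iff `k = 1` or `p^k = 4`. Multiplying these bounds between positive factors
gives the inequality, and equality holds iff it holds at every prime.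
-/

open ArithmeticFunction

theorem Finset.prod_eq_prod_iff_of_pos_of_le {ι R : Type*} [CommMonoidWithZero R] [PartialOrder R]
    [ZeroLEOneClass R] [PosMulStrictMono R] [Nontrivial R] {s : Finset ι} {f g : ι → R}
    (hf : ∀ i ∈ s, 0 < f i) (hfg : ∀ i ∈ s, f i ≤ g i) :
    ∏ i ∈ s, f i = ∏ i ∈ s, g i ↔ ∀ i ∈ s, f i = g i := by
  refine ⟨fun h => ?_, Finset.prod_congr rfl⟩
  by_contra! hne
  obtain ⟨i, hi, hfgi⟩ := hne
  exact (Finset.prod_lt_prod hf hfg ⟨i, hi, (hfg i hi).lt_of_ne hfgi⟩).ne h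

theorem beta_eq_id_mul_liouville (n : ℕ) :
    beta n = ((ArithmeticFunction.id : ArithmeticFunction ℤ) * liouville) n := by
  rw [mul_apply, Nat.sum_divisorsAntidiagonal
    (fun a b => (ArithmeticFunction.id : ArithmeticFunction ℤ) a * liouville b), beta]
  refine Finset.sum_congr rfl fun d hd => ?_
  rw [natCoe_apply, id_apply, lam,
    liouville_apply (Nat.div_pos (Nat.divisor_le hd) (Nat.pos_of_mem_divisors hd)).ne']

theorem beta_eq_prod_factorization {n : ℕ} (hn : n ≠ 0) :
    beta n = n.factorization.prod fun p k => beta (p ^ k) := by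
  simpa only [← beta_eq_id_mul_liouville] using
    (isMultiplicative_id.natCast.mul isMultiplicative_liouville).multiplicative_factorization _ hn

theorem beta_one : beta 1 = 1 := by
  simp [beta, lam]

theorem beta_prime_pow {p : ℕ} (hp : p.Prime) (k : ℕ) :
    beta (p ^ k) = ∑ i ∈ Finset.range (k + 1), (p : ℤ) ^ i * (-1) ^ (k - i) := by
  refine (Nat.sum_divisors_prime_pow hp).trans (Finset.sum_congr rfl fun i hi => ?_)
  rw [Nat.pow_div (Finset.mem_range_succ_iff.mp hi) hp.pos, lam, cardFactors_apply_prime_pow hp]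
  push_cast
  rfl

theorem beta_prime_pow_succ {p : ℕ} (hp : p.Prime) (k : ℕ) :
    beta (p ^ (k + 1)) = p ^ (k + 1) - beta (p ^ k) := by
  rw [beta_prime_pow hp, beta_prime_pow hp, Finset.sum_range_succ, Nat.sub_self, pow_zero, mul_one,
    add_comm, sub_eq_add_neg, ← Finset.sum_neg_distrib]
  congr 1
  refine Finset.sum_congr rfl fun i hi => ?_
  rw [Nat.succ_sub (Finset.mem_range_succ_iff.mp hi), pow_succ]
  ring

theorem beta_prime_pow_mem_Icc {p : ℕ} (hp : p.Prime) (k : ℕ) :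
    beta (p ^ k) ∈ Set.Icc 1 ((p : ℤ) ^ k) := by
  induction k with
  | zero => simp [beta_one]
  | succ k ih =>
    have hpk : (p : ℤ) ^ k * 2 ≤ p ^ (k + 1) := by
      rw [pow_succ]; gcongr; exact_mod_cast hp.two_le
    have hpk_ge : (1 : ℤ) ≤ p ^ k := one_le_pow₀ (by exact_mod_cast hp.one_le)
    rw [beta_prime_pow_succ hp]
    constructor <;> linarith [ih.1, ih.2]

theorem one_le_beta_prime_pow {p : ℕ} (hp : p.Prime) (k : ℕ) : 1 ≤ beta (p ^ k) :=
  (beta_prime_pow_mem_Icc hp k).1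

theorem beta_prime_pow_le_sub_one {p : ℕ} (hp : p.Prime) {k : ℕ} (hk : k ≠ 0) :
    beta (p ^ k) ≤ p ^ k - 1 := by
  obtain ⟨j, rfl⟩ := Nat.exists_eq_add_one_of_ne_zero hk
  linarith [beta_prime_pow_succ hp j, one_le_beta_prime_pow hp j]

theorem beta_prime_pow_eq_one_iff {p : ℕ} (hp : p.Prime) (k : ℕ) :
    beta (p ^ k) = 1 ↔ k = 0 ∨ p = 2 ∧ k = 1 := by
  match k with
  | 0 => simp [beta_one]
  | 1 =>
    rw [beta_prime_pow_succ hp, pow_zero, pow_one, beta_one]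
    omega
  | j + 2 =>
    have hpj : (p : ℤ) ^ (j + 1) * 2 ≤ p ^ (j + 2) := by
      rw [pow_succ _ (j + 1)]; gcongr; exact_mod_cast hp.two_le
    have hpj_gt : (1 : ℤ) < p ^ (j + 1) := one_lt_pow₀ (by exact_mod_cast hp.one_lt) (by omega)
    rw [beta_prime_pow_succ hp]
    constructor
    · intro h
      linarith [(beta_prime_pow_mem_Icc hp (j + 1)).2]
    · omega

theorem beta_prime_pow_eq_sub_one_iff {p : ℕ} (hp : p.Prime) {k : ℕ} (hk : k ≠ 0) :
    beta (p ^ k) = p ^ k - 1 ↔ k = 1 ∨ p = 2 ∧ k = 2 := by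
  obtain ⟨j, rfl⟩ := Nat.exists_eq_add_one_of_ne_zero hk
  rw [beta_prime_pow_succ hp, sub_right_inj, beta_prime_pow_eq_one_iff hp]
  omega

theorem cast_phiStar (n : ℕ) :
    (phiStar n : ℤ) = n.factorization.prod fun p k => (p : ℤ) ^ k - 1 := by
  rw [phiStar, Nat.cast_finsuppProd]
  refine Finset.prod_congr rfl fun p hp => ?_
  have hp' := Nat.prime_of_mem_primeFactors (Nat.support_factorization n ▸ hp)
  dsimp only
  rw [Nat.cast_pred (pow_pos hp'.pos _), Nat.cast_pow]

theorem squarefree_or_eq_two_mul_squarefree_iff {n : ℕ} (hn : n ≠ 0) :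
    (Squarefree n ∨ ∃ m, Squarefree m ∧ n = 2 * m) ↔
      ∀ p ∈ n.primeFactors, n.factorization p = 1 ∨ p = 2 ∧ n.factorization p = 2 := by
  simp only [← Nat.support_factorization, Finsupp.mem_support_iff]
  constructor
  · rintro (hsq | ⟨m, hm, rfl⟩) p hnp
    · have := (Nat.squarefree_iff_factorization_le_one hn).mp hsq p
      omega
    · have hm0 : m ≠ 0 := right_ne_zero_of_mul hn
      have hmp := (Nat.squarefree_iff_factorization_le_one hm0).mp hm p
      rw [Nat.factorization_mul two_ne_zero hm0, Nat.prime_two.factorization, Finsupp.add_apply,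
        Finsupp.single_apply] at hnp ⊢
      split_ifs at hnp ⊢ <;> omega
  · intro h
    have hle : ∀ p, n.factorization p ≤ 1 ∨ p = 2 ∧ n.factorization p = 2 := fun p => by
      by_cases hp : n.factorization p = 0
      · omega
      · rcases h p hp with h1 | h1 <;> omega
    by_cases h2 : n.factorization 2 ≤ 1
    · left
      rw [Nat.squarefree_iff_factorization_le_one hn]
      intro p
      rcases hle p with h1 | ⟨rfl, -⟩ <;> omega
    · right
      have h2dvd : 2 ∣ n := Nat.dvd_of_factorization_pos (by omega)
      refine ⟨n / 2, ?_, (Nat.mul_div_cancel' h2dvd).symm⟩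
      rw [Nat.squarefree_iff_factorization_le_one (by omega), Nat.factorization_div h2dvd,
        Nat.prime_two.factorization]
      intro p
      rw [Finsupp.tsub_apply, Finsupp.single_apply]
      split_ifs with hp2 <;> rcases hle p with h1 | ⟨rfl, h1⟩ <;> omega

theorem stmt_5 (n : ℕ) (hn : 0 < n) :
    beta n ≤ (phiStar n : ℤ) ∧
    (beta n = (phiStar n : ℤ) ↔ Squarefree n ∨ ∃ m : ℕ, Squarefree m ∧ n = 2 * m) := by
  rw [beta_eq_prod_factorization hn.ne', cast_phiStar, Finsupp.prod, Finsupp.prod,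
    squarefree_or_eq_two_mul_squarefree_iff hn.ne', Nat.support_factorization]
  have hk (p) (hp : p ∈ n.primeFactors) : n.factorization p ≠ 0 :=
    (Finsupp.mem_support_iff (f := n.factorization)).mp hp
  have hpos (p) (hp : p ∈ n.primeFactors) : 0 < beta (p ^ n.factorization p) :=
    one_le_beta_prime_pow (Nat.prime_of_mem_primeFactors hp) _
  have hle (p) (hp : p ∈ n.primeFactors) :
      beta (p ^ n.factorization p) ≤ p ^ n.factorization p - 1 :=
    beta_prime_pow_le_sub_one (Nat.prime_of_mem_primeFactors hp) (hk p hp)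
  refine ⟨Finset.prod_le_prod (fun p hp => (hpos p hp).le) hle, ?_⟩
  rw [Finset.prod_eq_prod_iff_of_pos_of_le hpos hle]
  exact forall₂_congr fun p hp =>
    beta_prime_pow_eq_sub_one_iff (Nat.prime_of_mem_primeFactors hp) (hk p hp)
end

section
/- For every positive integer n, the sum of those integers k with 1 ≤ k ≤ n for which gcd(k, n) is a perfect square equals n(β(n) + χ(n))/2, where χ(n) = 1 if n is a perfect square and χ(n) = 0 otherwise. -/
/-!
Write `χ` for the indicator of the perfect squares. Since `∑_{d ∣ m} λ(d) = χ(m)` (both sides are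
multiplicative, and on `p ^ a` the left side is `1 - 1 + ⋯ ± 1`), the condition on `k` can be
replaced by the weight `∑_{d ∣ gcd(k, n)} λ(d)`. Swapping the sums, each divisor `d` of `n`
contributes `λ(d)` times the sum of the multiples of `d` up to `n`, that is `λ(d) · n (n/d + 1) / 2`,
and summing over `d` gives `n (β(n) + χ(n)) / 2`.
-/

open Finset ArithmeticFunction
open scoped ArithmeticFunction.zeta

theorem Nat.isSquare_iff_forall_even_factorization {n : ℕ} (hn : n ≠ 0) :
    IsSquare n ↔ ∀ p, Even (n.factorization p) := by
  constructor
  · rintro ⟨r, rfl⟩ p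
    have hr : r ≠ 0 := by rintro rfl; simp at hn
    rw [Nat.factorization_mul hr hr]
    exact ⟨_, rfl⟩
  · intro h
    refine ⟨n.factorization.prod fun p k => p ^ (k / 2), ?_⟩
    conv_lhs => rw [← Nat.prod_factorization_pow_eq_self hn]
    rw [Finsupp.prod, Finsupp.prod, ← prod_mul_distrib]
    refine prod_congr rfl fun p _ => ?_
    rw [← pow_add, ← two_mul, Nat.two_mul_div_two_of_even (h p)]

namespace ArithmeticFunction

theorem coe_zeta_mul_liouville_apply_prime_pow {p : ℕ} (hp : p.Prime) (k : ℕ) :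
    (ζ * liouville : ArithmeticFunction ℤ) (p ^ k) = if Even k then 1 else 0 := by
  have hpow : ∀ i ∈ range (k + 1), liouville (p ^ i) = (-1) ^ i := fun i _ => by
    rw [liouville_apply (pow_ne_zero i hp.ne_zero), cardFactors_apply_prime_pow hp]
  rw [coe_zeta_mul_apply, Nat.sum_divisors_prime_pow hp, sum_congr rfl hpow, neg_one_geom_sum]
  by_cases hk : Even k <;> simp [hk, Nat.even_add_one]

theorem coe_zeta_mul_liouville_apply {n : ℕ} (hn : n ≠ 0) :
    (ζ * liouville : ArithmeticFunction ℤ) n = if IsSquare n then 1 else 0 := by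
  rw [(isMultiplicative_zeta.natCast.mul isMultiplicative_liouville).multiplicative_factorization _
    hn, Finsupp.prod]
  rw [prod_congr rfl fun p hp => coe_zeta_mul_liouville_apply_prime_pow
    (Nat.prime_of_mem_primeFactors (Nat.support_factorization n ▸ hp)) _, prod_boole]
  congr 1
  rw [Nat.isSquare_iff_forall_even_factorization hn, eq_iff_iff]
  refine ⟨fun h p => ?_, fun h p _ => h p⟩
  by_cases hp : p ∈ n.factorization.support
  · exact h p hp
  · simp [Finsupp.notMem_support_iff.mp hp]

theorem sum_divisors_liouville {n : ℕ} (hn : n ≠ 0) :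
    ∑ d ∈ n.divisors, liouville d = if IsSquare n then 1 else 0 := by
  rw [← coe_zeta_mul_liouville_apply hn, coe_zeta_mul_apply]

end ArithmeticFunction

theorem lam_eq_liouville {n : ℕ} (hn : n ≠ 0) : lam n = liouville n :=
  (liouville_apply hn).symm

theorem beta_eq_sum_divisors_mul_liouville (n : ℕ) :
    beta n = ∑ d ∈ n.divisors, ((n / d : ℕ) : ℤ) * liouville d := by
  rw [beta, ← Nat.sum_div_divisors]
  refine sum_congr rfl fun d hd => ?_
  rw [Nat.div_div_self (Nat.dvd_of_mem_divisors hd) (Nat.mem_divisors.mp hd).2,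
    lam_eq_liouville (Nat.pos_of_mem_divisors hd).ne']

theorem two_mul_sum_Icc_one (m : ℕ) : 2 * ∑ j ∈ Icc 1 m, (j : ℤ) = m * (m + 1) := by
  induction m with
  | zero => simp
  | succ m ih =>
    rw [sum_Icc_succ_top (by omega), mul_add, ih]
    push_cast
    ring

theorem Icc_one_filter_dvd_mul {d : ℕ} (hd : d ≠ 0) (m : ℕ) :
    {k ∈ Icc 1 (d * m) | d ∣ k} = (Icc 1 m).image (d * ·) := by
  ext k
  simp only [mem_filter, mem_Icc, mem_image]
  constructor
  · rintro ⟨⟨hk1, hkn⟩, j, rfl⟩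
    exact ⟨j, ⟨Nat.pos_of_mul_pos_left hk1, Nat.le_of_mul_le_mul_left hkn
      (Nat.pos_of_mul_pos_right hk1)⟩, rfl⟩
  · rintro ⟨j, ⟨hj1, hjm⟩, rfl⟩
    exact ⟨⟨Nat.mul_pos (Nat.pos_of_ne_zero hd) hj1, Nat.mul_le_mul_left d hjm⟩, dvd_mul_right d j⟩

theorem two_mul_sum_Icc_one_filter_dvd {d n : ℕ} (hd : d ∣ n) :
    2 * ∑ k ∈ Icc 1 n with d ∣ k, (k : ℤ) = n * ((n / d : ℕ) + 1) := by
  obtain ⟨m, rfl⟩ := hd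
  rcases eq_or_ne d 0 with rfl | hd
  · simp
  rw [Icc_one_filter_dvd_mul hd, sum_image fun _ _ _ _ h => Nat.eq_of_mul_eq_mul_left
    (Nat.pos_of_ne_zero hd) h, Nat.mul_div_cancel_left _ (Nat.pos_of_ne_zero hd)]
  push_cast
  rw [← mul_sum, mul_left_comm, two_mul_sum_Icc_one]
  ring

theorem sum_Icc_one_filter_isSquare_gcd {n : ℕ} (hn : n ≠ 0) :
    ∑ k ∈ Icc 1 n with IsSquare (k.gcd n), (k : ℤ) =
      ∑ d ∈ n.divisors, liouville d * ∑ k ∈ Icc 1 n with d ∣ k, (k : ℤ) := by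
  have hweight : ∀ k ∈ Icc 1 n, (if IsSquare (k.gcd n) then (k : ℤ) else 0) =
      ∑ d ∈ n.divisors, if d ∣ k then liouville d * k else 0 := fun k _ => by
    have hdvd : ∀ d ∈ n.divisors, d ∣ k ↔ d ∣ k.gcd n := fun d hd =>
      (and_iff_left (Nat.dvd_of_mem_divisors hd)).symm.trans Nat.dvd_gcd_iff.symm
    rw [← sum_filter, ← sum_mul, filter_congr hdvd, Nat.divisors_filter_dvd_of_dvd hn
      (Nat.gcd_dvd_right k n), sum_divisors_liouville (Nat.gcd_ne_zero_right hn)]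
    split_ifs <;> simp
  rw [sum_filter, sum_congr rfl hweight, sum_comm]
  exact sum_congr rfl fun d _ => by rw [mul_sum, sum_filter]

theorem stmt_8 (n : ℕ) (hn : 0 < n) :
    2 * ∑ k ∈ (Finset.Icc 1 n).filter (fun k => IsSquare (Nat.gcd k n)), (k : ℤ) =
      (n : ℤ) * (beta n + if IsSquare n then 1 else 0) := by
  rw [sum_Icc_one_filter_isSquare_gcd hn.ne', mul_sum]
  calc ∑ d ∈ n.divisors, 2 * (liouville d * ∑ k ∈ Icc 1 n with d ∣ k, (k : ℤ))
      = ∑ d ∈ n.divisors, n * (((n / d : ℕ) : ℤ) * liouville d + liouville d) :=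
        sum_congr rfl fun d hd => by
          rw [mul_left_comm, two_mul_sum_Icc_one_filter_dvd (Nat.dvd_of_mem_divisors hd)]
          ring
    _ = n * (beta n + if IsSquare n then 1 else 0) := by
      rw [← mul_sum, sum_add_distrib, beta_eq_sum_divisors_mul_liouville,
        sum_divisors_liouville hn.ne']
end

section
/- Let f, g, h, k be completely multiplicative arithmetic functions (with values in the complex numbers). Then (f∗g)·(h∗k) = (fh)∗(fk)∗(gh)∗(gk)∗w, where ∗ denotes Dirichlet convolution, products of functions are pointwise products, and w is the arithmetic function with w(n) = μ(m)f(m)g(m)h(m)k(m) if n = m² is a perfect square and w(n) = 0 otherwise; here μ is the Möbius function. -/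
/-!
Both sides are multiplicative, so it suffices to compare them at prime powers `p ^ e`. Writing
`x, y, z, t` for the values of `f, g, h, k` at `p`, the left side at `p ^ e` is
`h_e(x, y) h_e(z, t)`, with `h_e` the complete homogeneous polynomial of degree `e` in two
variables, while the right side is the `e`-th coefficient of
`(1 - xyzt X²) / ((1 - xz X)(1 - xt X)(1 - yz X)(1 - yt X))`, the factor `1 - xyzt X²` coming
from `w`. The product `T` of the four geometric series satisfies
`T_{e+2} = xyzt T_e + h_{e+2}(x, y) h_{e+2}(z, t)`, a consequence of
`h_{a+1} h_{b+1} = zt h_a h_b + h_{a+b+2}`, and this is exactly the claimed identity.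
-/

/-- Dirichlet convolution of two complex-valued arithmetic functions. -/
noncomputable def dconv (F G : ℕ → ℂ) (n : ℕ) : ℂ := ∑ p ∈ n.divisorsAntidiagonal, F p.1 * G p.2

/-- The function `w` with `w(m²) = μ(m) f(m) g(m) h(m) k(m)` and `w(n) = 0` for `n` not a
square. -/
noncomputable def wfun (f g h k : ℕ → ℂ) (n : ℕ) : ℂ :=
  if IsSquare n then
    (ArithmeticFunction.moebius (Nat.sqrt n) : ℂ) * f (Nat.sqrt n) * g (Nat.sqrt n) *
      h (Nat.sqrt n) * k (Nat.sqrt n)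
  else 0

open Finset PowerSeries

namespace PowerSeries

def geomSeries {R : Type*} [Semiring R] (a : R) : R⟦X⟧ := mk (a ^ ·)

lemma geomSeries_mul {R : Type*} [CommSemiring R] (a b : R) :
    geomSeries (a * b) = rescale a (geomSeries b) := by
  ext n
  simp [geomSeries, mul_pow]

end PowerSeries

section CompleteHomogeneous

variable {R : Type*} [CommRing R] (x y z t : R)

def completeHom₂ (n : ℕ) : R := ∑ ij ∈ antidiagonal n, x ^ ij.1 * y ^ ij.2

@[simp] lemma completeHom₂_zero : completeHom₂ x y 0 = 1 := by simp [completeHom₂]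

lemma completeHom₂_succ (n : ℕ) :
    completeHom₂ x y (n + 1) = x * completeHom₂ x y n + y ^ (n + 1) := by
  rw [completeHom₂, Nat.sum_antidiagonal_succ, completeHom₂, mul_sum, add_comm, pow_zero,
    one_mul]
  exact congrArg (· + _) (sum_congr rfl fun _ _ => by ring)

lemma completeHom₂_add_two (n : ℕ) :
    completeHom₂ x y (n + 2) = x ^ (n + 2) + y ^ (n + 2) + x * y * completeHom₂ x y n := by
  have h (ij : ℕ × ℕ) : x ^ (ij.1 + 1) * y ^ (ij.2 + 1) = x * y * (x ^ ij.1 * y ^ ij.2) := by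
    ring
  rw [completeHom₂, Nat.antidiagonal_succ_succ', sum_cons, sum_cons, sum_map, completeHom₂,
    mul_sum]
  simp only [Function.Embedding.coe_prodMap, Function.Embedding.coeFn_mk, Prod.map_fst,
    Prod.map_snd, Nat.succ_eq_add_one, h]
  ring

lemma completeHom₂_succ_mul_succ (a b : ℕ) :
    completeHom₂ x y (a + 1) * completeHom₂ x y (b + 1) =
      x * y * (completeHom₂ x y a * completeHom₂ x y b) + completeHom₂ x y (a + b + 2) := by
  induction a generalizing b with
  | zero =>
    simp only [completeHom₂_succ x y 0, completeHom₂_zero, zero_add]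
    rw [show b + 2 = b + 1 + 1 from rfl, completeHom₂_succ x y (b + 1), completeHom₂_succ x y b]
    ring
  | succ a ih =>
    rw [completeHom₂_succ x y (a + 1), show a + 1 + b + 2 = (a + b + 2) + 1 by omega,
      completeHom₂_succ x y (a + b + 2)]
    linear_combination x * ih b + y ^ (a + 2) * completeHom₂_succ x y b -
      x * y * completeHom₂ x y b * completeHom₂_succ x y a

lemma coeff_geomSeries_mul_geomSeries (n : ℕ) :
    coeff n (geomSeries x * geomSeries y) = completeHom₂ x y n := by
  simp [geomSeries, coeff_mul, completeHom₂]

lemma coeff_rescale_mul_rescale_add_two (d : ℕ) :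
    coeff (d + 2)
        (rescale x (geomSeries z * geomSeries t) * rescale y (geomSeries z * geomSeries t)) =
      x * y * z * t *
        coeff d
          (rescale x (geomSeries z * geomSeries t) * rescale y (geomSeries z * geomSeries t)) +
      completeHom₂ x y (d + 2) * completeHom₂ z t (d + 2) := by
  have hmid : ∑ ij ∈ antidiagonal d, x ^ (ij.1 + 1) * completeHom₂ z t (ij.1 + 1) *
        (y ^ (ij.2 + 1) * completeHom₂ z t (ij.2 + 1)) =
      x * y * z * t * ∑ ij ∈ antidiagonal d, x ^ ij.1 * completeHom₂ z t ij.1 *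
        (y ^ ij.2 * completeHom₂ z t ij.2) +
      x * y * completeHom₂ z t (d + 2) * completeHom₂ x y d := by
    rw [completeHom₂.eq_1 x y d, mul_sum, mul_sum, ← sum_add_distrib]
    refine sum_congr rfl fun ij hij => ?_
    rw [HasAntidiagonal.mem_antidiagonal] at hij
    rw [← hij]
    linear_combination x ^ ij.1 * y ^ ij.2 * x * y * completeHom₂_succ_mul_succ z t ij.1 ij.2
  rw [coeff_mul, Nat.antidiagonal_succ_succ', sum_cons, sum_cons, sum_map, coeff_mul]
  simp only [Function.Embedding.coe_prodMap, Function.Embedding.coeFn_mk, Prod.map_fst,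
    Prod.map_snd, coeff_rescale, coeff_geomSeries_mul_geomSeries, Nat.succ_eq_add_one, hmid,
    completeHom₂_add_two x y d, pow_zero, one_mul, completeHom₂_zero]
  ring

theorem mk_completeHom₂_mul_completeHom₂ :
    mk (fun n => completeHom₂ x y n * completeHom₂ z t n) =
      geomSeries (x * z) * geomSeries (x * t) * geomSeries (y * z) * geomSeries (y * t) *
        (1 - C (x * y * z * t) * X ^ 2) := by
  set T := rescale x (geomSeries z * geomSeries t) * rescale y (geomSeries z * geomSeries t)
  have hT :
      geomSeries (x * z) * geomSeries (x * t) * geomSeries (y * z) * geomSeries (y * t) = T := by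
    simp only [T, geomSeries_mul, map_mul]
    ring
  ext n
  rw [hT, mul_sub, mul_one, map_sub, mul_left_comm, coeff_C_mul, coeff_mul_X_pow', coeff_mk]
  match n with
  | 0 =>
    rw [coeff_mul]
    simp only [coeff_rescale, coeff_geomSeries_mul_geomSeries]
    simp
  | 1 =>
    rw [coeff_mul]
    simp only [coeff_rescale, coeff_geomSeries_mul_geomSeries]
    simp only [Nat.sum_antidiagonal_succ, HasAntidiagonal.antidiagonal_zero, sum_singleton,
      completeHom₂_succ, completeHom₂_zero, Nat.not_ofNat_le_one, ↓reduceIte, mul_zero,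
      sub_zero]
    ring
  | d + 2 =>
    rw [if_pos (by omega), Nat.add_sub_cancel, coeff_rescale_mul_rescale_add_two]
    ring

end CompleteHomogeneous

lemma Nat.Coprime.isSquare_mul_iff {m n : ℕ} (hmn : m.Coprime n) :
    IsSquare (m * n) ↔ IsSquare m ∧ IsSquare n := by
  refine ⟨fun ⟨c, hc⟩ => ?_, fun ⟨hm, hn⟩ => hm.mul hn⟩
  rw [← sq] at hc
  obtain ⟨a, rfl⟩ := exists_eq_pow_of_mul_eq_pow (Nat.isUnit_iff.mpr hmn) hc
  obtain ⟨b, rfl⟩ :=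
    exists_eq_pow_of_mul_eq_pow (Nat.isUnit_iff.mpr hmn.symm) ((mul_comm _ _).trans hc)
  exact ⟨IsSquare.sq a, IsSquare.sq b⟩

lemma Nat.Prime.isSquare_pow_iff {p e : ℕ} (hp : p.Prime) : IsSquare (p ^ e) ↔ Even e := by
  refine ⟨fun ⟨c, hc⟩ => ?_, fun he => he.isSquare_pow p⟩
  obtain ⟨j, -, rfl⟩ := (Nat.dvd_prime_pow hp).1 (Dvd.intro c hc.symm)
  rw [← pow_add] at hc
  exact ⟨j, Nat.pow_right_injective hp.two_le hc⟩

namespace ArithmeticFunction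

open scoped ArithmeticFunction.Moebius

def IsCompletelyMultiplicative {R : Type*} [MonoidWithZero R] (f : ArithmeticFunction R) : Prop :=
  f 1 = 1 ∧ ∀ m n, f (m * n) = f m * f n

namespace IsCompletelyMultiplicative

lemma isMultiplicative {R : Type*} [MonoidWithZero R] {f : ArithmeticFunction R}
    (hf : f.IsCompletelyMultiplicative) : f.IsMultiplicative :=
  ⟨hf.1, fun _ => hf.2 _ _⟩

lemma map_pow {R : Type*} [MonoidWithZero R] {f : ArithmeticFunction R}
    (hf : f.IsCompletelyMultiplicative) (n e : ℕ) : f (n ^ e) = f n ^ e := by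
  induction e with
  | zero => simpa using hf.1
  | succ e ih => rw [pow_succ, hf.2, ih, pow_succ]

lemma pmul {R : Type*} [CommMonoidWithZero R] {f g : ArithmeticFunction R}
    (hf : f.IsCompletelyMultiplicative) (hg : g.IsCompletelyMultiplicative) :
    (f.pmul g).IsCompletelyMultiplicative :=
  ⟨by simp [pmul_apply, hf.1, hg.1],
    fun m n => by simp only [pmul_apply, hf.2, hg.2, mul_mul_mul_comm]⟩

end IsCompletelyMultiplicative

section PrimePowerSeries

variable {R : Type*} [Semiring R]

def primePowerSeries (p : ℕ) (f : ArithmeticFunction R) : R⟦X⟧ := mk fun e => f (p ^ e)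

@[simp] lemma coeff_primePowerSeries (p e : ℕ) (f : ArithmeticFunction R) :
    coeff e (primePowerSeries p f) = f (p ^ e) :=
  coeff_mk _ _

lemma primePowerSeries_mul {p : ℕ} (hp : p.Prime) (f g : ArithmeticFunction R) :
    primePowerSeries p (f * g) = primePowerSeries p f * primePowerSeries p g := by
  ext e
  rw [coeff_primePowerSeries, coeff_mul, mul_apply, Nat.sum_divisorsAntidiagonal (f · * g ·),
    Nat.sum_divisors_prime_pow hp, Nat.sum_antidiagonal_eq_sum_range_succ_mk]
  refine sum_congr rfl fun i hi => ?_
  rw [mem_range] at hi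
  dsimp only
  rw [Nat.pow_div (by omega) hp.pos, coeff_primePowerSeries, coeff_primePowerSeries]

lemma IsCompletelyMultiplicative.primePowerSeries_eq {f : ArithmeticFunction R}
    (hf : f.IsCompletelyMultiplicative) (p : ℕ) : primePowerSeries p f = geomSeries (f p) := by
  ext e
  simp [geomSeries, hf.map_pow]

end PrimePowerSeries

section OnSquares

variable {R : Type*}

def onSquares [Zero R] (f : ArithmeticFunction R) : ArithmeticFunction R :=
  ⟨fun n => if IsSquare n then f n.sqrt else 0, by simp⟩

lemma onSquares_apply [Zero R] (f : ArithmeticFunction R) (n : ℕ) :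
    onSquares f n = if IsSquare n then f n.sqrt else 0 :=
  rfl

lemma onSquares_apply_mul_self [Zero R] (f : ArithmeticFunction R) (m : ℕ) :
    onSquares f (m * m) = f m := by
  rw [onSquares_apply, if_pos ⟨m, rfl⟩, Nat.sqrt_eq]

lemma IsMultiplicative.onSquares [MonoidWithZero R] {f : ArithmeticFunction R}
    (hf : f.IsMultiplicative) : f.onSquares.IsMultiplicative := by
  refine ⟨(onSquares_apply_mul_self f 1).trans hf.map_one, fun {m n} hmn => ?_⟩
  by_cases hsq : IsSquare m ∧ IsSquare n
  · obtain ⟨⟨a, rfl⟩, ⟨b, rfl⟩⟩ := hsq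
    rw [show a * a * (b * b) = a * b * (a * b) by ring]
    simp only [onSquares_apply_mul_self]
    exact hf.map_mul_of_coprime (Nat.coprime_mul_iff_right.1 (Nat.coprime_mul_iff_left.1 hmn).1).1
  · rw [onSquares_apply, if_neg (by rwa [hmn.isSquare_mul_iff]), onSquares_apply,
      onSquares_apply]
    rw [not_and_or] at hsq
    rcases hsq with h | h <;> simp [h]

lemma primePowerSeries_onSquares_moebius_pmul [CommRing R] {f : ArithmeticFunction R}
    (hf : f.IsCompletelyMultiplicative) {p : ℕ} (hp : p.Prime) :
    primePowerSeries p (onSquares ((μ : ArithmeticFunction R).pmul f)) = 1 - C (f p) * X ^ 2 := by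
  ext e
  rw [coeff_primePowerSeries, map_sub, coeff_one, coeff_C_mul_X_pow]
  rcases Nat.even_or_odd e with ⟨j, rfl⟩ | ⟨j, rfl⟩
  · rw [pow_add, onSquares_apply_mul_self, pmul_apply, intCoe_apply, hf.map_pow]
    rcases j with _ | _ | j
    · simp
    · simp [moebius_apply_prime hp]
    · rw [moebius_apply_prime_pow hp (by omega), if_neg (by omega), if_neg (by omega),
        if_neg (by omega), Int.cast_zero, zero_mul, sub_zero]
  · have hodd : ¬IsSquare (p ^ (2 * j + 1)) := by
      rw [hp.isSquare_pow_iff]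
      exact Nat.not_even_two_mul_add_one j
    rw [onSquares_apply, if_neg hodd, if_neg (by omega), if_neg (by omega), sub_zero]

end OnSquares

theorem IsCompletelyMultiplicative.pmul_mul_eq {R : Type*} [CommRing R]
    {f g h k : ArithmeticFunction R}
    (hf : f.IsCompletelyMultiplicative) (hg : g.IsCompletelyMultiplicative)
    (hh : h.IsCompletelyMultiplicative) (hk : k.IsCompletelyMultiplicative) :
    (f * g).pmul (h * k) = f.pmul h * f.pmul k * g.pmul h * g.pmul k *
      onSquares ((μ : ArithmeticFunction R).pmul (((f.pmul g).pmul h).pmul k)) := by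
  have hfghk := ((hf.pmul hg).pmul hh).pmul hk
  refine (IsMultiplicative.eq_iff_eq_on_prime_powers _ ?_ _ ?_).2 fun p e hp => ?_
  · exact (hf.isMultiplicative.mul hg.isMultiplicative).pmul
      (hh.isMultiplicative.mul hk.isMultiplicative)
  · exact ((((hf.pmul hh).isMultiplicative.mul (hf.pmul hk).isMultiplicative).mul
      (hg.pmul hh).isMultiplicative).mul (hg.pmul hk).isMultiplicative).mul
      (isMultiplicative_moebius.intCast.pmul hfghk.isMultiplicative).onSquares
  rw [pmul_apply, ← coeff_primePowerSeries p e (f * g), ← coeff_primePowerSeries p e (h * k),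
    ← coeff_primePowerSeries p e]
  simp only [primePowerSeries_mul hp, hf.primePowerSeries_eq, hg.primePowerSeries_eq,
    hh.primePowerSeries_eq, hk.primePowerSeries_eq, (hf.pmul hh).primePowerSeries_eq,
    (hf.pmul hk).primePowerSeries_eq, (hg.pmul hh).primePowerSeries_eq,
    (hg.pmul hk).primePowerSeries_eq, primePowerSeries_onSquares_moebius_pmul hfghk hp,
    coeff_geomSeries_mul_geomSeries, pmul_apply]
  rw [← mk_completeHom₂_mul_completeHom₂, coeff_mk]

section OfFun

variable {R : Type*}

/-- The value at `0` is forced to be `0`: a completely multiplicative `f : ℕ → ℂ` may have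
`f 0 = 1`, and `dconv` never evaluates its arguments at `0` anyway. -/
def ofFun [Zero R] (F : ℕ → R) : ArithmeticFunction R :=
  ⟨fun n => if n = 0 then 0 else F n, if_pos rfl⟩

lemma ofFun_apply [Zero R] {F : ℕ → R} {n : ℕ} (hn : n ≠ 0) : ofFun F n = F n :=
  if_neg hn

lemma apply_eq_of_ofFun_eq [Zero R] {F G : ℕ → R} (hFG : ofFun F = ofFun G) {n : ℕ}
    (hn : n ≠ 0) : F n = G n := by
  simpa only [ofFun_apply hn] using DFunLike.congr_fun hFG n

lemma ofFun_mul_eq_pmul [MulZeroClass R] (F G : ℕ → R) :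
    ofFun (fun n => F n * G n) = (ofFun F).pmul (ofFun G) := by
  ext n
  rcases eq_or_ne n 0 with rfl | hn
  · simp
  · simp [pmul_apply, ofFun_apply hn]

lemma isCompletelyMultiplicative_ofFun [MonoidWithZero R] {F : ℕ → R} (h1 : F 1 = 1)
    (hmul : ∀ a b, F (a * b) = F a * F b) : (ofFun F).IsCompletelyMultiplicative := by
  refine ⟨by simp [ofFun_apply, h1], fun m n => ?_⟩
  rcases eq_or_ne m 0 with rfl | hm
  · simp
  rcases eq_or_ne n 0 with rfl | hn
  · simp
  rw [ofFun_apply hm, ofFun_apply hn, ofFun_apply (mul_ne_zero hm hn), hmul]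

end OfFun

lemma ofFun_dconv (F G : ℕ → ℂ) : ofFun (dconv F G) = ofFun F * ofFun G := by
  ext n
  rcases eq_or_ne n 0 with rfl | hn
  · simp
  rw [ofFun_apply hn, mul_apply, dconv]
  refine sum_congr rfl fun ab hab => ?_
  obtain ⟨hab, -⟩ := Nat.mem_divisorsAntidiagonal.1 hab
  rw [ofFun_apply (left_ne_zero_of_mul (hab ▸ hn)),
    ofFun_apply (right_ne_zero_of_mul (hab ▸ hn))]

lemma ofFun_wfun (f g h k : ℕ → ℂ) :
    ofFun (wfun f g h k) = onSquares ((μ : ArithmeticFunction ℂ).pmul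
      ((((ofFun f).pmul (ofFun g)).pmul (ofFun h)).pmul (ofFun k))) := by
  ext n
  rcases eq_or_ne n 0 with rfl | hn
  · simp
  rw [ofFun_apply hn, wfun, onSquares_apply]
  split_ifs
  · have hs : n.sqrt ≠ 0 := Nat.sqrt_eq_zero.not.2 hn
    simp only [pmul_apply, intCoe_apply, ofFun_apply hs]
    ring
  · rfl

end ArithmeticFunction

open ArithmeticFunction in
theorem stmt_12_general (f g h k : ℕ → ℂ)
    (hf1 : f 1 = 1) (hf : ∀ a b : ℕ, f (a * b) = f a * f b)
    (hg1 : g 1 = 1) (hg : ∀ a b : ℕ, g (a * b) = g a * g b)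
    (hh1 : h 1 = 1) (hh : ∀ a b : ℕ, h (a * b) = h a * h b)
    (hk1 : k 1 = 1) (hk : ∀ a b : ℕ, k (a * b) = k a * k b)
    (n : ℕ) :
    dconv f g n * dconv h k n =
      dconv (fun m => f m * h m)
        (dconv (fun m => f m * k m)
          (dconv (fun m => g m * h m)
            (dconv (fun m => g m * k m) (wfun f g h k)))) n := by
  rcases eq_or_ne n 0 with rfl | hn
  · simp [dconv]
  refine apply_eq_of_ofFun_eq (F := fun m => dconv f g m * dconv h k m) ?_ hn
  simp only [ofFun_mul_eq_pmul, ofFun_dconv, ofFun_wfun]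
  rw [(isCompletelyMultiplicative_ofFun hf1 hf).pmul_mul_eq
    (isCompletelyMultiplicative_ofFun hg1 hg) (isCompletelyMultiplicative_ofFun hh1 hh)
    (isCompletelyMultiplicative_ofFun hk1 hk)]
  simp only [mul_assoc]

theorem stmt_12 (f g h k : ℕ → ℂ)
    (hf1 : f 1 = 1) (hf : ∀ a b : ℕ, f (a * b) = f a * f b)
    (hg1 : g 1 = 1) (hg : ∀ a b : ℕ, g (a * b) = g a * g b)
    (hh1 : h 1 = 1) (hh : ∀ a b : ℕ, h (a * b) = h a * h b)
    (hk1 : k 1 = 1) (hk : ∀ a b : ℕ, k (a * b) = k a * k b)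
    (n : ℕ) (hn : 0 < n) :
    dconv f g n * dconv h k n =
      dconv (fun m => f m * h m)
        (dconv (fun m => f m * k m)
          (dconv (fun m => g m * h m)
            (dconv (fun m => g m * k m) (wfun f g h k)))) n :=
  stmt_12_general f g h k hf1 hf hg1 hg hh1 hh hk1 hk n
end

section
/- For every positive integer n, β*(n) = Σ_{dk² = n} β(d)·k·q(k), the sum being over all pairs (d, k) with dk² = n, where β*(n) = Σ_{d ∥ n} d·λ(n/d) is the sum over unitary divisors d of n (i.e., d ∣ n with gcd(d, n/d) = 1) and q is the characteristic function of the squarefree numbers. -/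
/-- The unitary analog `β*(n) = ∑_{d ∥ n} d · λ(n/d)`, the sum being over unitary divisors. -/
def betaStar (n : ℕ) : ℤ :=
  ∑ d ∈ n.divisors.filter (fun d => Nat.Coprime d (n / d)), (d : ℤ) * lam (n / d)

open Finset ArithmeticFunction
open scoped ArithmeticFunction.Moebius ArithmeticFunction.zeta

lemma lam_mul {a b : ℕ} (ha : a ≠ 0) (hb : b ≠ 0) : lam (a * b) = lam a * lam b := by
  rw [lam, lam, lam, cardFactors_mul ha hb, pow_add]

lemma ite_squarefree_eq_moebius_mul_lam (k : ℕ) :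
    (if Squarefree k then (1 : ℤ) else 0) = μ k * lam k := by
  by_cases h : Squarefree k
  · rw [if_pos h, moebius_apply_of_squarefree h, lam, ← mul_pow, neg_mul_neg, one_mul, one_pow]
  · rw [if_neg h, moebius_eq_zero_of_not_squarefree h, zero_mul]

lemma sum_divisors_moebius (m : ℕ) : ∑ t ∈ m.divisors, (μ t : ℤ) = if m = 1 then 1 else 0 := by
  rw [← coe_zeta_mul_apply, coe_zeta_mul_moebius, one_apply]

lemma betaStar_eq_sum_moebius (n : ℕ) :
    betaStar n = ∑ d ∈ n.divisors, ∑ t ∈ (d.gcd (n / d)).divisors, μ t * (d * lam (n / d)) := by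
  rw [betaStar, sum_filter]
  refine sum_congr rfl fun d _ => ?_
  rw [← sum_mul, sum_divisors_moebius, ite_mul, one_mul, zero_mul]

lemma mul_lam_mul_beta_div_sq {n k : ℕ} (hn : n ≠ 0) (hk : k ^ 2 ∣ n) :
    k * lam k * beta (n / k ^ 2) = ∑ e ∈ (n / k ^ 2).divisors, (k * e : ℕ) * lam (n / (k * e)) := by
  have hk0 : k ≠ 0 := by rintro rfl; simp_all
  obtain ⟨m, rfl⟩ := hk
  rw [Nat.mul_div_cancel_left _ (by positivity), beta, mul_sum]
  refine sum_congr rfl fun e he => ?_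
  obtain ⟨⟨f, rfl⟩, hm⟩ := Nat.mem_divisors.mp he
  have he0 : e ≠ 0 := left_ne_zero_of_mul hm
  have hquot : k ^ 2 * (e * f) / (k * e) = k * f := by
    rw [show k ^ 2 * (e * f) = k * e * (k * f) by ring,
      Nat.mul_div_cancel_left _ (by positivity)]
  rw [hquot, Nat.mul_div_cancel_left _ (by positivity), lam_mul hk0 (right_ne_zero_of_mul hm)]
  push_cast
  ring

lemma mem_divisors_and_mem_divisors_gcd_div_iff {n d t : ℕ} (hn : n ≠ 0) :
    d ∈ n.divisors ∧ t ∈ (d.gcd (n / d)).divisors ↔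
      d ∈ (n / t ^ 2).divisors.image (t * ·) ∧ t ∈ n.divisors.filter (fun k => k ^ 2 ∣ n) := by
  simp only [Nat.mem_divisors, mem_image, mem_filter, Nat.dvd_gcd_iff, ne_eq, hn,
    not_false_eq_true, and_true]
  have hreorder (t e : ℕ) : t * e * t = t ^ 2 * e := by ring
  constructor
  · rintro ⟨hdn, ⟨⟨e, rfl⟩, htq⟩, -⟩
    rw [Nat.dvd_div_iff_mul_dvd hdn, hreorder] at htq
    have ht2 : t ^ 2 ∣ n := dvd_of_mul_right_dvd htq
    refine ⟨⟨e, ⟨(Nat.dvd_div_iff_mul_dvd ht2).mpr htq, fun h => hn ?_⟩, rfl⟩,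
      (dvd_pow_self t two_ne_zero).trans ht2, ht2⟩
    rw [← Nat.mul_div_cancel' ht2, h, mul_zero]
  · rintro ⟨⟨e, ⟨he, -⟩, rfl⟩, -, ht2⟩
    rw [Nat.dvd_div_iff_mul_dvd ht2] at he
    have hte : t * e ∣ n := (mul_dvd_mul_right (dvd_pow_self t two_ne_zero) e).trans he
    refine ⟨hte, ⟨dvd_mul_right t e, (Nat.dvd_div_iff_mul_dvd hte).mpr (hreorder t e ▸ he)⟩,
      fun h => ?_⟩
    exact hn (Nat.eq_zero_of_zero_dvd ((Nat.gcd_eq_zero_iff.mp h).1 ▸ hte))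

theorem stmt_17 (n : ℕ) (hn : 0 < n) :
    betaStar n =
      ∑ k ∈ n.divisors.filter (fun k => k ^ 2 ∣ n),
        beta (n / k ^ 2) * (k : ℤ) * (if Squarefree k then 1 else 0) := by
  rw [betaStar_eq_sum_moebius,
    sum_comm' fun _ _ => mem_divisors_and_mem_divisors_gcd_div_iff hn.ne']
  refine sum_congr rfl fun k hk => ?_
  obtain ⟨hkn, hk2⟩ := mem_filter.mp hk
  rw [sum_image fun _ _ _ _ h => Nat.eq_of_mul_eq_mul_left (Nat.pos_of_mem_divisors hkn) h,
    ← mul_sum, ← mul_lam_mul_beta_div_sq hn.ne' hk2, ite_squarefree_eq_moebius_mul_lam]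
  ring
end

section
/- For every integer k ≥ 1, the number n_k = 2^{2^k − 1} is super-imperfect (i.e., satisfies 2·β(β(n_k)) = n_k) if and only if k ∈ {1, 2, 3, 4, 5}. -/
/-- The natural-number version of `β` (the values of `β` are nonnegative). -/
def betaN (n : ℕ) : ℕ := (beta n).toNat

/-!
β is the Dirichlet convolution `id ∗ λ`, hence multiplicative, and on prime powers
`(p + 1) β(p ^ n) = p ^ (n + 1) - (-1) ^ (n + 1)`. So `β(2 ^ (2 ^ k - 1)) = (2 ^ 2 ^ k - 1) / 3`,
which is the product `F₁ ⋯ F_{k-1}` of pairwise coprime Fermat numbers, and `β` of it is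
`∏ β(Fᵢ)`. While the `Fᵢ` are prime (`k ≤ 5`) each factor is `Fᵢ - 1 = 2 ^ 2 ^ i`, which
gives `2 ^ (2 ^ k - 2)`. For `k ≥ 6` the factor `β(F₅) = β(641) β(6700417) = 640 · 6700416`
is divisible by 3, so `β(β(n_k))` is not a power of two.
-/

open ArithmeticFunction Finset
open Nat (fermatNumber)

def betaArith : ArithmeticFunction ℤ :=
  (ArithmeticFunction.id : ArithmeticFunction ℕ) * liouville

lemma beta_eq_betaArith (n : ℕ) : beta n = betaArith n := by
  rcases eq_or_ne n 0 with rfl | hn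
  · simp [beta]
  simp only [betaArith, mul_apply, natCoe_apply, id_apply]
  rw [Nat.sum_divisorsAntidiagonal (fun a b => (a : ℤ) * liouville b)]
  refine sum_congr rfl fun d hd => ?_
  rw [liouville_apply (Nat.div_pos (Nat.divisor_le hd) (Nat.pos_of_mem_divisors hd)).ne', lam]

lemma isMultiplicative_betaArith : betaArith.IsMultiplicative :=
  isMultiplicative_id.natCast.mul isMultiplicative_liouville

lemma beta_mul {m n : ℕ} (h : m.Coprime n) : beta (m * n) = beta m * beta n := by
  simp only [beta_eq_betaArith, isMultiplicative_betaArith.map_mul_of_coprime h]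

open scoped Function in
lemma beta_prod {ι : Type*} (g : ι → ℕ) (s : Finset ι)
    (hs : (s : Set ι).Pairwise (Nat.Coprime on g)) :
    beta (∏ i ∈ s, g i) = ∏ i ∈ s, beta (g i) := by
  simp only [beta_eq_betaArith, isMultiplicative_betaArith.map_prod g s hs]

lemma beta_prime {p : ℕ} (hp : p.Prime) : beta p = p - 1 := by
  rw [beta, hp.divisors, sum_pair hp.one_lt.ne, Nat.div_one, Nat.div_self hp.pos, lam, lam,
    cardFactors_one, cardFactors_apply_prime hp]
  push_cast; ring

lemma beta_prime_pow_mul {p : ℕ} (hp : p.Prime) (n : ℕ) :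
    beta (p ^ n) * (p + 1) = p ^ (n + 1) - (-1) ^ (n + 1) := by
  rw [← sub_neg_eq_add, ← geom_sum₂_mul, beta, Nat.sum_divisors_prime_pow hp,
    add_tsub_cancel_right]
  refine congrArg (· * _) (sum_congr rfl fun i hi => ?_)
  rw [Nat.pow_div (Nat.lt_succ_iff.mp (mem_range.mp hi)) hp.pos, lam,
    cardFactors_apply_prime_pow hp]
  push_cast; ring

lemma beta_two_pow_two_pow_sub_one {k : ℕ} (hk : k ≠ 0) :
    beta (2 ^ (2 ^ k - 1)) = ∏ i ∈ Ico 1 k, (fermatNumber i : ℤ) := by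
  have h3 : 3 * beta (2 ^ (2 ^ k - 1)) = ((fermatNumber k - 2 : ℕ) : ℤ) := by
    have := beta_prime_pow_mul Nat.prime_two (2 ^ k - 1)
    rw [Nat.sub_add_cancel Nat.one_le_two_pow,
      (Nat.even_pow.mpr ⟨even_two, hk⟩).neg_one_pow] at this
    rw [Nat.cast_sub (Nat.two_lt_fermatNumber k).le, fermatNumber]
    push_cast at this ⊢
    linarith
  rw [← Nat.prod_fermatNumber, range_eq_Ico, prod_eq_prod_Ico_succ_bot (Nat.pos_of_ne_zero hk),
    Nat.fermatNumber_zero] at h3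
  push_cast at h3
  exact mul_left_cancel₀ three_ne_zero h3

lemma beta_fermatNumber_of_prime {i : ℕ} (hp : (fermatNumber i).Prime) :
    beta (fermatNumber i) = 2 ^ 2 ^ i := by
  rw [beta_prime hp, fermatNumber]
  push_cast; ring

lemma beta_prod_fermatNumber {k : ℕ} :
    beta (∏ i ∈ Ico 1 k, fermatNumber i) = ∏ i ∈ Ico 1 k, beta (fermatNumber i) :=
  beta_prod _ _ fun _ _ _ _ hij => Nat.coprime_fermatNumber_fermatNumber hij

lemma three_dvd_beta_fermatNumber_five : 3 ∣ beta (fermatNumber 5) := by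
  rw [show fermatNumber 5 = 641 * 6700417 by norm_num [fermatNumber], beta_mul (by norm_num),
    beta_prime (by norm_num), beta_prime (by norm_num)]
  exact Dvd.dvd.mul_left ⟨2233472, by norm_num⟩ _

lemma sum_Ico_one_two_pow (k : ℕ) : ∑ i ∈ Ico 1 k, 2 ^ i = 2 ^ k - 2 := by
  induction k with
  | zero => rfl
  | succ k ih =>
    rcases Nat.eq_zero_or_pos k with rfl | hk
    · rfl
    have : 2 ≤ 2 ^ k := Nat.le_self_pow hk.ne' 2
    rw [sum_Ico_succ_top hk, ih, pow_succ]
    omega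

lemma two_mul_betaN_eq_two_pow_succ_iff {n e : ℕ} :
    2 * betaN n = 2 ^ (e + 1) ↔ beta n = 2 ^ e := by
  have : 0 < 2 ^ e := Nat.two_pow_pos e
  have h2 : ((2 ^ e : ℕ) : ℤ) = 2 ^ e := by push_cast; rfl
  rw [pow_succ', Nat.mul_left_cancel_iff two_pos, betaN, ← h2]
  omega

lemma beta_prod_fermatNumber_of_prime {k : ℕ} (h : ∀ i ∈ Ico 1 k, (fermatNumber i).Prime) :
    beta (∏ i ∈ Ico 1 k, fermatNumber i) = 2 ^ (2 ^ k - 2) := by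
  rw [beta_prod_fermatNumber, prod_congr rfl fun i hi => beta_fermatNumber_of_prime (h i hi),
    prod_pow_eq_pow_sum, sum_Ico_one_two_pow]

lemma betaN_two_pow_two_pow_sub_one {k : ℕ} (hk : k ≠ 0) :
    betaN (2 ^ (2 ^ k - 1)) = ∏ i ∈ Ico 1 k, fermatNumber i := by
  rw [betaN, beta_two_pow_two_pow_sub_one hk, ← Nat.cast_prod, Int.toNat_natCast]

theorem stmt_19 (k : ℕ) (hk : 1 ≤ k) :
    2 * betaN (betaN (2 ^ (2 ^ k - 1))) = 2 ^ (2 ^ k - 1) ↔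
      k ∈ ({1, 2, 3, 4, 5} : Finset ℕ) := by
  have hk0 : k ≠ 0 := by omega
  have hpow : 2 ^ k - 1 = 2 ^ k - 2 + 1 := by
    have := Nat.le_self_pow hk0 2
    omega
  rw [betaN_two_pow_two_pow_sub_one hk0, hpow, two_mul_betaN_eq_two_pow_succ_iff]
  simp only [mem_insert, mem_singleton]
  constructor
  · intro h
    by_contra hk5
    have h5 : 5 ∈ Ico 1 k := mem_Ico.mpr (by omega)
    have h3 : (3 : ℤ) ∣ 2 ^ (2 ^ k - 2) := by
      rw [← h, beta_prod_fermatNumber]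
      exact three_dvd_beta_fermatNumber_five.trans (dvd_prod_of_mem _ h5)
    exact absurd (Int.prime_three.dvd_of_dvd_pow h3) (by norm_num)
  · intro h
    refine beta_prod_fermatNumber_of_prime fun i hi => ?_
    obtain ⟨hi1, hi5⟩ : 1 ≤ i ∧ i < 5 := by rw [mem_Ico] at hi; omega
    interval_cases i <;> norm_num [fermatNumber]
end
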